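/- Let M and N be ℚ[X]-modules, f : M → N and g : N → M module maps with g ∘ f = ε·2X·id_M and f ∘ g = ε'·2X·id_N for signs ε, ε' ∈ {±1}. Let u_X(M) denote the supremum of orders of X-torsion elements of M (assumed finite for both M and N). Then |u_X(M) - u_X(N)| ≤ 1. -/
import Mathlib

lemma stmt5_aux {M N : Type*} [AddCommGroup M] [AddCommGroup N]
    [Module (Polynomial ℚ) M] [Module (Polynomial ℚ) N]
    (f : M →ₗ[Polynomial ℚ] N) (g : N →ₗ[Polynomial ℚ] M)
    (ε : ℚ) (hε : ε = 1 ∨ ε = -1)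
    (hgf : ∀ a : M, g (f a) = (Polynomial.C ε * ((2 : Polynomial ℚ) * Polynomial.X)) • a)
    (dN : ℕ)
    (hdN1 : ∀ b : N, (∃ n : ℕ, (Polynomial.X : Polynomial ℚ) ^ n • b = 0) →
      (Polynomial.X : Polynomial ℚ) ^ dN • b = 0) :
    ∀ a : M, (∃ n : ℕ, (Polynomial.X : Polynomial ℚ) ^ n • a = 0) →
      (Polynomial.X : Polynomial ℚ) ^ (dN + 1) • a = 0 := by
  intro a ⟨n, hn⟩
  have hfa : (Polynomial.X : Polynomial ℚ) ^ dN • f a = 0 :=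
    hdN1 (f a) ⟨n, by rw [← map_smul, hn, map_zero]⟩
  have h0 : ((Polynomial.X : Polynomial ℚ) ^ dN *
      (Polynomial.C ε * ((2 : Polynomial ℚ) * Polynomial.X))) • a = 0 := by
    rw [mul_smul, ← hgf, ← map_smul, hfa, map_zero]
  have hε2 : ε * ε = 1 := by rcases hε with h | h <;> simp [h]
  have h2 : (2 : Polynomial ℚ) = Polynomial.C 2 := (map_ofNat Polynomial.C 2).symm
  have hkey : Polynomial.C (ε / 2) * ((Polynomial.X : Polynomial ℚ) ^ dN *
      (Polynomial.C ε * ((2 : Polynomial ℚ) * Polynomial.X)))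
      = (Polynomial.X : Polynomial ℚ) ^ (dN + 1) := by
    rw [h2, pow_succ]
    have hc : Polynomial.C (ε / 2) * (Polynomial.C ε * Polynomial.C (2:ℚ)) = 1 := by
      rw [← Polynomial.C_mul, ← Polynomial.C_mul, ← Polynomial.C_1]
      congr 1
      field_simp
      linarith
    calc Polynomial.C (ε / 2) * ((Polynomial.X : Polynomial ℚ) ^ dN *
        (Polynomial.C ε * (Polynomial.C (2:ℚ) * Polynomial.X)))
        = (Polynomial.C (ε / 2) * (Polynomial.C ε * Polynomial.C (2:ℚ))) *
          ((Polynomial.X : Polynomial ℚ) ^ dN * Polynomial.X) := by ring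
      _ = (Polynomial.X : Polynomial ℚ) ^ dN * Polynomial.X := by rw [hc, one_mul]
  calc (Polynomial.X : Polynomial ℚ) ^ (dN + 1) • a
      = (Polynomial.C (ε / 2) * ((Polynomial.X : Polynomial ℚ) ^ dN *
          (Polynomial.C ε * ((2 : Polynomial ℚ) * Polynomial.X)))) • a := by rw [hkey]
    _ = Polynomial.C (ε / 2) • ((Polynomial.X : Polynomial ℚ) ^ dN *
          (Polynomial.C ε * ((2 : Polynomial ℚ) * Polynomial.X))) • a := by rw [mul_smul]
    _ = 0 := by rw [h0, smul_zero]

/-- Let `M`, `N` be `ℚ[X]`-modules, `f : M → N`, `g : N → M` module maps with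
`g ∘ f = ε · 2X · id_M` and `f ∘ g = ε' · 2X · id_N` for signs `ε, ε' ∈ {±1}`.
If `dM` (resp. `dN`) is the supremum of orders of `X`-torsion elements of `M` (resp. `N`),
characterized by: `X^dM` kills every torsion element and `dM` is minimal with this
property, then `|dM - dN| ≤ 1`. -/
theorem stmt_5 {M N : Type*} [AddCommGroup M] [AddCommGroup N]
    [Module (Polynomial ℚ) M] [Module (Polynomial ℚ) N]
    (f : M →ₗ[Polynomial ℚ] N) (g : N →ₗ[Polynomial ℚ] M)
    (ε ε' : ℚ) (hε : ε = 1 ∨ ε = -1) (hε' : ε' = 1 ∨ ε' = -1)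
    (hgf : ∀ a : M, g (f a) = (Polynomial.C ε * ((2 : Polynomial ℚ) * Polynomial.X)) • a)
    (hfg : ∀ b : N, f (g b) = (Polynomial.C ε' * ((2 : Polynomial ℚ) * Polynomial.X)) • b)
    (dM dN : ℕ)
    (hdM1 : ∀ a : M, (∃ n : ℕ, (Polynomial.X : Polynomial ℚ) ^ n • a = 0) →
      (Polynomial.X : Polynomial ℚ) ^ dM • a = 0)
    (hdM2 : ∀ d : ℕ, (∀ a : M, (∃ n : ℕ, (Polynomial.X : Polynomial ℚ) ^ n • a = 0) →
      (Polynomial.X : Polynomial ℚ) ^ d • a = 0) → dM ≤ d)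
    (hdN1 : ∀ b : N, (∃ n : ℕ, (Polynomial.X : Polynomial ℚ) ^ n • b = 0) →
      (Polynomial.X : Polynomial ℚ) ^ dN • b = 0)
    (hdN2 : ∀ d : ℕ, (∀ b : N, (∃ n : ℕ, (Polynomial.X : Polynomial ℚ) ^ n • b = 0) →
      (Polynomial.X : Polynomial ℚ) ^ d • b = 0) → dN ≤ d) :
    |(dM : ℤ) - (dN : ℤ)| ≤ 1 := by
  have h1 : dM ≤ dN + 1 := hdM2 (dN + 1) (stmt5_aux f g ε hε hgf dN hdN1)
  have h2 : dN ≤ dM + 1 := hdN2 (dM + 1) (stmt5_aux g f ε' hε' hfg dM hdM1)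
  rw [abs_le]
  omega
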